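/- Let 0 < α < β < 1ve real numbers, let γ satisfy αβ·min{(1−β)/((1−α)β), 1} ≤ γ < 1, and let k ≥ 4 be an even integer. Then the trapezoid T(γ) admits a dissection into k pieces, each affinely equivalent to Q(α, β). -/

import Mathlib

open Set

/-- For `0 < α < β < 1`, `Qab α β` is the convex quadrangle `Q(α,β)` with vertices
`a = (0,0)`, `b = (1−α,0)`, `c = (1−β, 1−(1−β)/(1−α))`, `d = (0, 1−α(1−β)/((1−α)β))`. -/
noncomputable def Qab (α β : ℝ) : Set (ℝ × ℝ) :=
  convexHull ℝ {((0 : ℝ), (0 : ℝ)), (1 - α, 0), (1 - β, 1 - (1 - β) / (1 - α)),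
    (0, 1 - α * (1 - β) / ((1 - α) * β))}

/-- For `0 < γ < 1`, `Tg γ` is the trapezoid `T(γ)` with vertices
`(0,0)`, `(1,0)`, `(γ,1)`, `(0,1)`. -/
noncomputable def Tg (γ : ℝ) : Set (ℝ × ℝ) :=
  convexHull ℝ {((0 : ℝ), (0 : ℝ)), (1, 0), (γ, 1), (0, 1)}

/-- `B` is the image of `A` under an invertible affine map of the plane,
i.e. `A` and `B` are affinely equivalent. -/
def AffineCopy (A B : Set (ℝ × ℝ)) : Prop :=
  ∃ φ : (ℝ × ℝ) ≃ᵃ[ℝ] (ℝ × ℝ), φ '' A = B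

/-!
Put `δ = min (α(1-β)/(1-α)) (αβ)`, so that `δ ≤ γ`. For either value of `δ` a single segment,
from the left edge to the slanted edge, cuts `T(δ)` into two affine copies of `Q(α,β)`.
A quadrangle with bottom edge on `y = 0` and top edge on `y = 1` is an affine image of `T(δ)`
as soon as its top edge is `δ` times its bottom edge, or its bottom edge `δ` times its top edge.
Write `k = 2m` and cut `T(γ)` by `m - 1` segments joining the two horizontal edges into `m - 1`
strips of the first kind, followed by one last strip that is of the first kind if `γ = δ` and
of the second kind otherwise; each strip is then cut into two copies of `Q(α,β)`.
-/

noncomputable section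

def DissectsInto (Q P : Set (ℝ × ℝ)) (n : ℕ) : Prop :=
  ∃ f : Fin n → Set (ℝ × ℝ), (⋃ i, f i) = P ∧
    (Pairwise fun i j => Disjoint (interior (f i)) (interior (f j))) ∧ ∀ i, AffineCopy Q (f i)

namespace AffineCopy

theorem trans {A B C : Set (ℝ × ℝ)} (hAB : AffineCopy A B) (hBC : AffineCopy B C) :
    AffineCopy A C := by
  obtain ⟨φ, rfl⟩ := hAB
  obtain ⟨ψ, rfl⟩ := hBC
  exact ⟨φ.trans ψ, by rw [image_image]; rfl⟩

end AffineCopy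

namespace DissectsInto

variable {Q P P' P₁ P₂ : Set (ℝ × ℝ)} {m n : ℕ}

theorem single (h : AffineCopy Q P) : DissectsInto Q P 1 :=
  ⟨fun _ => P, iUnion_const P, fun i j hij => absurd (Subsingleton.elim i j) hij, fun _ => h⟩

theorem of_affineCopy_tile {Q' : Set (ℝ × ℝ)} (hQ : AffineCopy Q Q') (h : DissectsInto Q' P n) :
    DissectsInto Q P n := by
  obtain ⟨f, hunion, hdisj, hcopy⟩ := h
  exact ⟨f, hunion, hdisj, fun i => hQ.trans (hcopy i)⟩

theorem image (h : DissectsInto Q P n) (φ : (ℝ × ℝ) ≃ᵃ[ℝ] (ℝ × ℝ)) :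
    DissectsInto Q (φ '' P) n := by
  obtain ⟨f, rfl, hdisj, hcopy⟩ := h
  let ψ := (φ.toContinuousAffineEquiv).toHomeomorph
  refine ⟨fun i => ψ '' f i, image_iUnion.symm, fun i j hij => ?_,
    fun i => (hcopy i).trans ⟨φ, rfl⟩⟩
  simp only [← ψ.image_interior]
  exact (hdisj hij).image ψ.injective.injOn (subset_univ _) (subset_univ _)

theorem of_affineCopy (h : DissectsInto Q P n) (hP : AffineCopy P P') : DissectsInto Q P' n := by
  obtain ⟨φ, rfl⟩ := hP
  exact h.image φ

theorem union (h₁ : DissectsInto Q P₁ m) (h₂ : DissectsInto Q P₂ n)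
    (hP : Disjoint (interior P₁) (interior P₂)) : DissectsInto Q (P₁ ∪ P₂) (m + n) := by
  obtain ⟨f₁, rfl, hdisj₁, hcopy₁⟩ := h₁
  obtain ⟨f₂, rfl, hdisj₂, hcopy₂⟩ := h₂
  have hcross : ∀ i j, Disjoint (interior (f₁ i)) (interior (f₂ j)) := fun i j =>
    hP.mono (interior_mono (subset_iUnion f₁ i)) (interior_mono (subset_iUnion f₂ j))
  refine ⟨Fin.append f₁ f₂, ?_, ?_, Fin.addCases (by simpa) (by simpa)⟩
  · refine (iUnion_subset <| Fin.addCases (fun i => ?_) fun i => ?_).antisymm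
      (union_subset (iUnion_subset fun i => ?_) (iUnion_subset fun i => ?_))
    · simpa using subset_iUnion (Fin.append f₁ f₂) (Fin.castAdd n i)
    · simpa using subset_iUnion (Fin.append f₁ f₂) (Fin.natAdd m i)
    · simpa using subset_union_of_subset_left (subset_iUnion f₁ i) _
    · simpa using subset_union_of_subset_right (subset_iUnion f₂ i) _
  · intro i j hij
    induction i using Fin.addCases <;> induction j using Fin.addCases <;>
      simp only [Fin.append_left, Fin.append_right] at hij ⊢
    · exact hdisj₁ fun h => hij (h ▸ rfl)
    · exact hcross _ _
    · exact (hcross _ _).symm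
    · exact hdisj₂ fun h => hij (h ▸ rfl)

end DissectsInto

/-- Twice the signed area of the triangle `p q r`; positive iff `p, q, r` run counterclockwise. -/
def orient (p q r : ℝ × ℝ) : ℝ :=
  (q.1 - p.1) * (r.2 - p.2) - (q.2 - p.2) * (r.1 - p.1)

theorem orient_smul_add_smul (p q x y : ℝ × ℝ) {s t : ℝ} (hst : s + t = 1) :
    orient p q (s • x + t • y) = s * orient p q x + t * orient p q y := by
  simp only [orient, Prod.fst_add, Prod.snd_add, Prod.smul_fst, Prod.smul_snd, smul_eq_mul]
  linear_combination (q.1 * p.2 - p.1 * q.2) * hst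

theorem convex_setOf_orient_nonneg (p q : ℝ × ℝ) : Convex ℝ {r | 0 ≤ orient p q r} := by
  intro x hx y hy s t hs ht hst
  simp only [mem_ofPred_eq, orient_smul_add_smul p q x y hst] at *
  positivity

theorem mem_convexHull_triangle {u v w p : ℝ × ℝ} (huvw : 0 < orient u v w)
    (hu : 0 ≤ orient v w p) (hv : 0 ≤ orient w u p) (hw : 0 ≤ orient u v p) :
    p ∈ convexHull ℝ {u, v, w} := by
  have hsum : orient v w p + orient w u p + orient u v p = orient u v w := by
    simp only [orient]; ring
  have hD : orient u v w ≠ 0 := huvw.ne'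
  have key := (convex_convexHull ℝ {u, v, w}).sum_mem (t := Finset.univ)
    (w := ![orient v w p / orient u v w, orient w u p / orient u v w, orient u v p / orient u v w])
    (z := ![u, v, w]) (fun i _ => by fin_cases i <;> simp <;> positivity)
    (by simp only [Fin.sum_univ_three, Matrix.cons_val]
        rw [← add_div, ← add_div, hsum, div_self hD])
    (fun i _ => subset_convexHull ℝ _ (by fin_cases i <;> simp))
  convert key using 1
  simp only [Fin.sum_univ_three]
  ext <;> simp only [Matrix.cons_val_zero, Matrix.cons_val_one, Matrix.cons_val, Prod.fst_add,
    Prod.snd_add, Prod.smul_fst, Prod.smul_snd, smul_eq_mul] <;> field_simp <;> simp only [orient] <;>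
    ring

def IsConvexQuad (v₁ v₂ v₃ v₄ : ℝ × ℝ) : Prop :=
  0 < orient v₁ v₂ v₃ ∧ 0 < orient v₂ v₃ v₄ ∧ 0 < orient v₃ v₄ v₁ ∧ 0 < orient v₄ v₁ v₂

theorem IsConvexQuad.convexHull_eq {v₁ v₂ v₃ v₄ : ℝ × ℝ} (h : IsConvexQuad v₁ v₂ v₃ v₄) :
    convexHull ℝ {v₁, v₂, v₃, v₄} = {p | 0 ≤ orient v₁ v₂ p ∧ 0 ≤ orient v₂ v₃ p ∧
      0 ≤ orient v₃ v₄ p ∧ 0 ≤ orient v₄ v₁ p} := by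
  obtain ⟨h₁, h₂, h₃, h₄⟩ := h
  refine (convexHull_min ?_ ?_).antisymm fun p ⟨hp₁, hp₂, hp₃, hp₄⟩ => ?_
  · simp only [insert_subset_iff, singleton_subset_iff, mem_ofPred_eq]
    simp only [orient] at *
    refine ⟨⟨?_, ?_, ?_, ?_⟩, ⟨?_, ?_, ?_, ?_⟩, ⟨?_, ?_, ?_, ?_⟩, ⟨?_, ?_, ?_, ?_⟩⟩ <;> linarith
  · simp only [ofPred_and]
    exact (convex_setOf_orient_nonneg _ _).inter <| (convex_setOf_orient_nonneg _ _).inter <|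
      (convex_setOf_orient_nonneg _ _).inter (convex_setOf_orient_nonneg _ _)
  · rcases le_total 0 (orient v₁ v₃ p) with h | h
    · refine convexHull_mono ?_
        (mem_convexHull_triangle (u := v₁) (v := v₃) (w := v₄) ?_ hp₃ hp₄ h)
      · intro x hx; simp only [mem_insert_iff, mem_singleton_iff] at hx ⊢; tauto
      · simp only [orient] at h₃ ⊢; linarith
    · refine convexHull_mono ?_ (mem_convexHull_triangle h₁ hp₂ ?_ hp₁)
      · intro x hx; simp only [mem_insert_iff, mem_singleton_iff] at hx ⊢; tauto
      · simp only [orient] at h ⊢; linarith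

theorem disjoint_interior_of_subset_le_of_subset_ge {E : Type*} [AddCommGroup E]
    [TopologicalSpace E] [IsTopologicalAddGroup E] [Module ℝ E] [ContinuousSMul ℝ E]
    {f : StrongDual ℝ E} (hf : f ≠ 0) {c : ℝ} {S T : Set E} (hS : S ⊆ {x | f x ≤ c})
    (hT : T ⊆ {x | c ≤ f x}) : Disjoint (interior S) (interior T) := by
  have hint : ∀ U, interior (f ⁻¹' U) = f ⁻¹' interior U := fun U =>
    ((f.isOpenMap_of_ne_zero hf).preimage_interior_eq_interior_preimage f.continuous U).symm
  have hS' : interior S ⊆ f ⁻¹' Iio c := by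
    simpa [hint] using interior_mono (s := S) (t := f ⁻¹' Iic c) hS
  have hT' : interior T ⊆ f ⁻¹' Ioi c := by
    simpa [hint] using interior_mono (s := T) (t := f ⁻¹' Ici c) hT
  exact ((Iio_disjoint_Ioi_same).preimage f).mono hS' hT'

theorem disjoint_interior_of_orient {a b : ℝ × ℝ} (hab : a ≠ b) {S T : Set (ℝ × ℝ)}
    (hS : S ⊆ {p | 0 ≤ orient a b p}) (hT : T ⊆ {p | 0 ≤ orient b a p}) :
    Disjoint (interior S) (interior T) := by
  let f : StrongDual ℝ (ℝ × ℝ) :=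
    (b.1 - a.1) • ContinuousLinearMap.snd ℝ ℝ ℝ - (b.2 - a.2) • ContinuousLinearMap.fst ℝ ℝ ℝ
  have hf : f ≠ 0 := by
    intro h
    have h₁ := congrArg (· (1, 0)) h
    have h₂ := congrArg (· (0, 1)) h
    simp only [sub_apply, smul_apply, ContinuousLinearMap.coe_snd', smul_eq_mul, mul_zero,
      ContinuousLinearMap.coe_fst', mul_one, zero_sub, neg_sub, zero_apply, sub_zero, f] at h₁ h₂
    exact hab (Prod.ext (by linarith) (by linarith))
  refine (disjoint_interior_of_subset_le_of_subset_ge hf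
    (c := (b.1 - a.1) * a.2 - (b.2 - a.2) * a.1)
    (hT.trans fun p hp => ?_) (hS.trans fun p hp => ?_)).symm
  all_goals
    simp only [orient, mem_ofPred_eq, sub_apply, smul_apply, ContinuousLinearMap.coe_snd',
      ContinuousLinearMap.coe_fst', smul_eq_mul, f] at hp ⊢
    linarith

def affineEquivOfDet (a b c d e f : ℝ) (h : a * d - b * c ≠ 0) : (ℝ × ℝ) ≃ᵃ[ℝ] (ℝ × ℝ) :=
  (LinearEquiv.ofIsUnitDet (v := Module.Basis.finTwoProd ℝ) (v' := Module.Basis.finTwoProd ℝ)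
    (f := Matrix.toLin (Module.Basis.finTwoProd ℝ) (Module.Basis.finTwoProd ℝ) !![a, b; c, d])
    (by rwa [LinearMap.toMatrix_toLin, Matrix.det_fin_two_of, isUnit_iff_ne_zero])
    ).toAffineEquiv.trans (AffineEquiv.constVAdd ℝ (ℝ × ℝ) (e, f))

@[simp]
theorem affineEquivOfDet_apply (a b c d e f : ℝ) (h : a * d - b * c ≠ 0) (p : ℝ × ℝ) :
    affineEquivOfDet a b c d e f h p = (a * p.1 + b * p.2 + e, c * p.1 + d * p.2 + f) := by
  simp [affineEquivOfDet, Matrix.toLin_finTwoProd_apply, add_comm]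

theorem affineCopy_convexHull_quad {p₁ p₂ p₃ p₄ q₁ q₂ q₃ q₄ : ℝ × ℝ}
    (φ : (ℝ × ℝ) ≃ᵃ[ℝ] (ℝ × ℝ)) (h₁ : φ p₁ = q₁) (h₂ : φ p₂ = q₂) (h₃ : φ p₃ = q₃)
    (h₄ : φ p₄ = q₄) :
    AffineCopy (convexHull ℝ {p₁, p₂, p₃, p₄}) (convexHull ℝ {q₁, q₂, q₃, q₄}) :=
  ⟨φ, by
    subst h₁ h₂ h₃ h₄
    simpa [image_insert_eq] using φ.toAffineMap.image_convexHull {p₁, p₂, p₃, p₄}⟩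

def strip (X₁ X₂ Y₁ Y₂ : ℝ) : Set (ℝ × ℝ) :=
  convexHull ℝ {(X₁, 0), (X₂, 0), (Y₂, 1), (Y₁, 1)}

theorem Tg_eq_strip (γ : ℝ) : Tg γ = strip 0 1 0 γ := rfl

section Strip

variable {X₁ X₂ X₃ Y₁ Y₂ Y₃ : ℝ}

theorem mem_strip_iff (hX : X₁ < X₂) (hY : Y₁ < Y₂) {p : ℝ × ℝ} :
    p ∈ strip X₁ X₂ Y₁ Y₂ ↔ 0 ≤ p.2 ∧ p.2 ≤ 1 ∧
      (1 - p.2) * X₁ + p.2 * Y₁ ≤ p.1 ∧ p.1 ≤ (1 - p.2) * X₂ + p.2 * Y₂ := by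
  have h : IsConvexQuad (X₁, 0) (X₂, 0) (Y₂, 1) (Y₁, 1) := by
    refine ⟨?_, ?_, ?_, ?_⟩ <;> simp only [orient] <;> linarith
  rw [strip, h.convexHull_eq]
  simp only [mem_ofPred_eq, orient]
  constructor <;> rintro ⟨h₁, h₂, h₃, h₄⟩ <;> refine ⟨?_, ?_, ?_, ?_⟩ <;> nlinarith

theorem strip_union_strip (hX₁ : X₁ < X₂) (hX₂ : X₂ < X₃) (hY₁ : Y₁ < Y₂) (hY₂ : Y₂ < Y₃) :
    strip X₁ X₂ Y₁ Y₂ ∪ strip X₂ X₃ Y₂ Y₃ = strip X₁ X₃ Y₁ Y₃ := by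
  ext p
  simp only [mem_union, mem_strip_iff hX₁ hY₁, mem_strip_iff hX₂ hY₂,
    mem_strip_iff (hX₁.trans hX₂) (hY₁.trans hY₂)]
  constructor
  · rintro (⟨h₁, h₂, h₃, h₄⟩ | ⟨h₁, h₂, h₃, h₄⟩) <;> refine ⟨h₁, h₂, ?_, ?_⟩ <;>
      nlinarith [mul_nonneg h₁ (sub_nonneg.2 h₂)]
  · rintro ⟨h₁, h₂, h₃, h₄⟩
    by_cases hp : p.1 ≤ (1 - p.2) * X₂ + p.2 * Y₂
    · exact .inl ⟨h₁, h₂, h₃, hp⟩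
    · exact .inr ⟨h₁, h₂, by linarith, h₄⟩

theorem disjoint_interior_strip (hX₁ : X₁ < X₂) (hX₂ : X₂ < X₃) (hY₁ : Y₁ < Y₂)
    (hY₂ : Y₂ < Y₃) :
    Disjoint (interior (strip X₁ X₂ Y₁ Y₂)) (interior (strip X₂ X₃ Y₂ Y₃)) := by
  refine disjoint_interior_of_orient (a := (X₂, 0)) (b := (Y₂, 1)) (by simp)
    (fun p hp => ?_) (fun p hp => ?_)
  · rw [mem_strip_iff hX₁ hY₁] at hp
    simp only [mem_ofPred_eq, orient]
    linarith
  · rw [mem_strip_iff hX₂ hY₂] at hp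
    simp only [mem_ofPred_eq, orient]
    linarith

theorem affineCopy_Tg_strip {δ : ℝ} (hX : X₁ < X₂) (h : Y₂ - Y₁ = δ * (X₂ - X₁)) :
    AffineCopy (Tg δ) (strip X₁ X₂ Y₁ Y₂) :=
  affineCopy_convexHull_quad (affineEquivOfDet (X₂ - X₁) (Y₁ - X₁) 0 1 X₁ 0 (by linarith))
    (by simp) (by simp) (by ext <;> simp; linarith) (by simp)

theorem affineCopy_Tg_strip_flip {δ : ℝ} (hY : Y₁ < Y₂) (h : X₂ - X₁ = δ * (Y₂ - Y₁)) :
    AffineCopy (Tg δ) (strip X₁ X₂ Y₁ Y₂) := by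
  have hrot : strip X₁ X₂ Y₁ Y₂ = convexHull ℝ {(Y₂, 1), (Y₁, 1), (X₁, 0), (X₂, 0)} := by
    rw [strip]; congr 1; ext; simp only [mem_insert_iff, mem_singleton_iff]; tauto
  rw [hrot]
  exact affineCopy_convexHull_quad (affineEquivOfDet (Y₁ - Y₂) (X₂ - Y₂) 0 (-1) Y₂ 1
    (by linarith)) (by simp) (by simp) (by ext <;> simp; linarith) (by ext <;> simp)

end Strip

theorem DissectsInto.strip_of_Tg {Q : Set (ℝ × ℝ)} {δ : ℝ} {n : ℕ} (hδ : 0 < δ)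
    (h : DissectsInto Q (Tg δ) n) {j : ℕ} (hj : 1 ≤ j) {x : ℝ} (hx : 0 < x) :
    DissectsInto Q (strip 0 x 0 (δ * x)) (j * n) := by
  induction j, hj using Nat.le_induction generalizing x with
  | base => simpa using h.of_affineCopy (affineCopy_Tg_strip hx (by ring))
  | succ j hj ih =>
    have hj' : (0 : ℝ) < j := by exact_mod_cast hj
    set y := x * j / (j + 1) with hy
    have hy₀ : 0 < y := by positivity
    have hyx : y < x := by rw [hy, div_lt_iff₀ (by positivity)]; linarith
    rw [← strip_union_strip (Y₂ := δ * y) (Y₃ := δ * x) hy₀ hyx (by positivity)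
      (by nlinarith), add_one_mul]
    exact (ih hy₀).union (h.of_affineCopy (affineCopy_Tg_strip hyx (by ring)))
      (disjoint_interior_strip hy₀ hyx (by positivity) (by nlinarith))

theorem exists_affineCopy_Tg_strip {δ γ : ℝ} (hδ : 0 < δ) (hδγ : δ ≤ γ) (hγ : γ < 1) :
    ∃ x, 0 < x ∧ x < 1 ∧ AffineCopy (Tg δ) (strip x 1 (δ * x) γ) := by
  rcases hδγ.eq_or_lt with rfl | hlt
  · exact ⟨1 / 2, by norm_num, by norm_num, affineCopy_Tg_strip (by norm_num) (by ring)⟩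
  -- the strip must be flipped: its top edge `γ - δ (1 - v)` is `1 / δ` times its bottom edge `v`
  have hδ₁ : 0 < 1 - δ ^ 2 := by nlinarith
  set v := δ * (γ - δ) / (1 - δ ^ 2) with hv
  have hv₀ : 0 < v := div_pos (mul_pos hδ (by linarith)) hδ₁
  have hv₁ : v < 1 := by rw [hv, div_lt_one hδ₁]; nlinarith
  have hvδ : v * (1 - δ ^ 2) = δ * (γ - δ) := div_mul_cancel₀ _ hδ₁.ne'
  refine ⟨1 - v, by linarith, by linarith, affineCopy_Tg_strip_flip ?_ ?_⟩
  · nlinarith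
  · linear_combination hvδ

section Cut

variable {v₁ v₂ v₃ v₄ a b : ℝ × ℝ} {θ η : ℝ}

theorem IsConvexQuad.cut (h : IsConvexQuad v₁ v₂ v₃ v₄) (hθ : θ ∈ Ioo 0 1) (hη : η ∈ Ioo 0 1)
    (ha : a = (1 - θ) • v₄ + θ • v₁) (hb : b = (1 - η) • v₂ + η • v₃) :
    IsConvexQuad v₂ b a v₁ ∧ IsConvexQuad a b v₃ v₄ := by
  obtain ⟨h₁, h₂, h₃, h₄⟩ := h
  obtain ⟨hθ₀, hθ₁⟩ := hθ
  obtain ⟨hη₀, hη₁⟩ := hη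
  have hθ' : 0 < 1 - θ := sub_pos.2 hθ₁
  have hη' : 0 < 1 - η := sub_pos.2 hη₁
  have ha₁ : a.1 = (1 - θ) * v₄.1 + θ * v₁.1 := by simp [ha]
  have ha₂ : a.2 = (1 - θ) * v₄.2 + θ * v₁.2 := by simp [ha]
  have hb₁ : b.1 = (1 - η) * v₂.1 + η * v₃.1 := by simp [hb]
  have hb₂ : b.2 = (1 - η) * v₂.2 + η * v₃.2 := by simp [hb]
  have ha₀ : 0 < orient v₂ v₃ a := by
    rw [show orient v₂ v₃ a = (1 - θ) * orient v₂ v₃ v₄ + θ * orient v₁ v₂ v₃ by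
      simp only [orient, ha₁, ha₂]; ring]
    exact add_pos (mul_pos hθ' h₂) (mul_pos hθ₀ h₁)
  have hb₀ : 0 < orient v₄ v₁ b := by
    rw [show orient v₄ v₁ b = (1 - η) * orient v₄ v₁ v₂ + η * orient v₃ v₄ v₁ by
      simp only [orient, hb₁, hb₂]; ring]
    exact add_pos (mul_pos hη' h₄) (mul_pos hη₀ h₃)
  refine ⟨⟨?_, ?_, ?_, ?_⟩, ⟨?_, ?_, ?_, ?_⟩⟩
  · rw [show orient v₂ b a = η * orient v₂ v₃ a by simp only [orient, hb₁, hb₂]; ring]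
    exact mul_pos hη₀ ha₀
  · rw [show orient b a v₁ = (1 - θ) * orient v₄ v₁ b by simp only [orient, ha₁, ha₂]; ring]
    exact mul_pos hθ' hb₀
  · rw [show orient a v₁ v₂ = (1 - θ) * orient v₄ v₁ v₂ by simp only [orient, ha₁, ha₂]; ring]
    exact mul_pos hθ' h₄
  · rw [show orient v₁ v₂ b = η * orient v₁ v₂ v₃ by simp only [orient, hb₁, hb₂]; ring]
    exact mul_pos hη₀ h₁
  · rw [show orient a b v₃ = (1 - η) * orient v₂ v₃ a by simp only [orient, hb₁, hb₂]; ring]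
    exact mul_pos hη' ha₀
  · rw [show orient b v₃ v₄ = (1 - η) * orient v₂ v₃ v₄ by simp only [orient, hb₁, hb₂]; ring]
    exact mul_pos hη' h₂
  · rw [show orient v₃ v₄ a = θ * orient v₃ v₄ v₁ by simp only [orient, ha₁, ha₂]; ring]
    exact mul_pos hθ₀ h₃
  · rw [show orient v₄ a b = θ * orient v₄ v₁ b by simp only [orient, ha₁, ha₂]; ring]
    exact mul_pos hθ₀ hb₀

theorem IsConvexQuad.convexHull_union_cut (h : IsConvexQuad v₁ v₂ v₃ v₄) (hθ : θ ∈ Ioo 0 1)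
    (hη : η ∈ Ioo 0 1) (ha : a = (1 - θ) • v₄ + θ • v₁) (hb : b = (1 - η) • v₂ + η • v₃) :
    convexHull ℝ {v₂, b, a, v₁} ∪ convexHull ℝ {a, b, v₃, v₄} = convexHull ℝ {v₁, v₂, v₃, v₄} := by
  obtain ⟨h₁, h₂⟩ := h.cut hθ hη ha hb
  set K := convexHull ℝ {v₁, v₂, v₃, v₄}
  have hK : ∀ v ∈ ({v₁, v₂, v₃, v₄} : Set (ℝ × ℝ)), v ∈ K := fun v hv => subset_convexHull ℝ _ hv
  have haK : a ∈ K :=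
    ha ▸ convex_convexHull ℝ _ (hK v₄ (by simp)) (hK v₁ (by simp)) (by linarith [hθ.2])
      hθ.1.le (by ring)
  have hbK : b ∈ K :=
    hb ▸ convex_convexHull ℝ _ (hK v₂ (by simp)) (hK v₃ (by simp)) (by linarith [hη.2])
      hη.1.le (by ring)
  refine (union_subset ?_ ?_).antisymm ?_
  · refine convexHull_min ?_ (convex_convexHull ℝ _)
    simp only [insert_subset_iff, singleton_subset_iff]
    exact ⟨hK v₂ (by simp), hbK, haK, hK v₁ (by simp)⟩
  · refine convexHull_min ?_ (convex_convexHull ℝ _)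
    simp only [insert_subset_iff, singleton_subset_iff]
    exact ⟨haK, hbK, hK v₃ (by simp), hK v₄ (by simp)⟩
  rw [show K = _ from h.convexHull_eq, h₁.convexHull_eq, h₂.convexHull_eq]
  rintro p ⟨hp₁, hp₂, hp₃, hp₄⟩
  have ha₁ : a.1 = (1 - θ) * v₄.1 + θ * v₁.1 := by simp [ha]
  have ha₂ : a.2 = (1 - θ) * v₄.2 + θ * v₁.2 := by simp [ha]
  have hb₁ : b.1 = (1 - η) * v₂.1 + η * v₃.1 := by simp [hb]
  have hb₂ : b.2 = (1 - η) * v₂.2 + η * v₃.2 := by simp [hb]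
  by_cases hp : 0 ≤ orient a b p
  · refine .inr ⟨hp, ?_, hp₃, ?_⟩
    · rw [show orient b v₃ p = (1 - η) * orient v₂ v₃ p by simp only [orient, hb₁, hb₂]; ring]
      exact mul_nonneg (by linarith [hη.2]) hp₂
    · rw [show orient v₄ a p = θ * orient v₄ v₁ p by simp only [orient, ha₁, ha₂]; ring]
      exact mul_nonneg hθ.1.le hp₄
  · refine .inl ⟨?_, ?_, ?_, hp₁⟩
    · rw [show orient v₂ b p = η * orient v₂ v₃ p by simp only [orient, hb₁, hb₂]; ring]
      exact mul_nonneg hη.1.le hp₂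
    · simp only [orient] at hp ⊢
      linarith
    · rw [show orient a v₁ p = (1 - θ) * orient v₄ v₁ p by simp only [orient, ha₁, ha₂]; ring]
      exact mul_nonneg (by linarith [hθ.2]) hp₄

theorem IsConvexQuad.dissectsInto_two_of_cut {Q : Set (ℝ × ℝ)} (h : IsConvexQuad v₁ v₂ v₃ v₄)
    (hθ : θ ∈ Ioo 0 1) (hη : η ∈ Ioo 0 1) (ha : a = (1 - θ) • v₄ + θ • v₁)
    (hb : b = (1 - η) • v₂ + η • v₃) (hQ₁ : AffineCopy Q (convexHull ℝ {v₂, b, a, v₁}))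
    (hQ₂ : AffineCopy Q (convexHull ℝ {a, b, v₃, v₄})) :
    DissectsInto Q (convexHull ℝ {v₁, v₂, v₃, v₄}) 2 := by
  obtain ⟨h₁, h₂⟩ := h.cut hθ hη ha hb
  have hab : b ≠ a := by
    rintro rfl
    have : orient b b v₃ = 0 := by simp only [orient]; ring
    linarith [h₂.1]
  rw [← h.convexHull_union_cut hθ hη ha hb]
  refine (DissectsInto.single hQ₁).union (.single hQ₂) (disjoint_interior_of_orient hab ?_ ?_)
  · rw [h₁.convexHull_eq]
    exact fun p hp => hp.2.1
  · rw [h₂.convexHull_eq]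
    exact fun p hp => hp.1

end Cut

def stdQuad (s t : ℝ) : Set (ℝ × ℝ) :=
  convexHull ℝ {(0, 0), (1, 0), (s, t), (0, 1)}

theorem affineCopy_Qab_stdQuad {α β : ℝ} (hα : 0 < α) (hαβ : α < β) (hβ : β < 1) :
    AffineCopy (Qab α β) (stdQuad ((1 - β) / (1 - α)) β) := by
  have hα₁ : 1 - α ≠ 0 := by linarith
  have hβ₀ : β ≠ 0 := by linarith
  have hβα : β - α ≠ 0 := by linarith
  refine affineCopy_convexHull_quad (affineEquivOfDet (1 / (1 - α)) 0 0
    ((1 - α) * β / (β - α)) 0 0 (by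
      rw [mul_zero, sub_zero]
      exact mul_ne_zero (one_div_ne_zero hα₁) (div_ne_zero (mul_ne_zero hα₁ hβ₀) hβα)))
    ?_ ?_ ?_ ?_ <;> ext <;> simp
  all_goals field_simp
  all_goals ring

variable {s t δ l : ℝ}

theorem dissectsInto_Tg_stdQuad_of_cut (hδ : 0 < δ) (hl : l ∈ Ioo 0 1) (hsl : s * l ∈ Ioo 0 1)
    (hcut : l * (1 - δ) * s = 1 - t)
    (hQ : AffineCopy (stdQuad s t)
      (convexHull ℝ {(0, s * l), (1 - l * (1 - δ), l), (δ, 1), (0, 1)})) :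
    DissectsInto (stdQuad s t) (Tg δ) 2 := by
  have hT : IsConvexQuad (0, 0) (1, 0) (δ, 1) (0, 1) := by
    refine ⟨?_, ?_, ?_, ?_⟩ <;> simp only [orient] <;> linarith
  refine hT.dissectsInto_two_of_cut (θ := 1 - s * l) (η := l)
    ⟨by linarith [hsl.2], by linarith [hsl.1]⟩ hl (by ext <;> simp) (by ext <;> simp; ring) ?_ hQ
  exact affineCopy_convexHull_quad (affineEquivOfDet (l * (δ - 1)) (-1) l 0 1 0
    (by linarith [hl.1])) (by simp) (by ext <;> simp; ring) (by ext <;> simp <;> linarith) (by simp)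

theorem dissectsInto_Tg_stdQuad_of_eq (hs₁ : s < 1) (ht₁ : t < 1) (hst : 1 < s + t)
    (hδ : δ = s + t - 1) : DissectsInto (stdQuad s t) (Tg δ) 2 := by
  have hs₀ : 0 < s := by linarith
  have hδ₁ : 0 < 1 - δ := by linarith
  have hd : 0 < s * (1 - δ) := mul_pos hs₀ hδ₁
  obtain ⟨l, hcut, hl₀, hl₁⟩ : ∃ l, l * (1 - δ) * s = 1 - t ∧ 0 < l ∧ l < 1 :=
    ⟨(1 - t) / (s * (1 - δ)), by field_simp, div_pos (by linarith) hd,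
      by rw [div_lt_one hd, hδ]; nlinarith⟩
  have hsl : s * l < 1 := by nlinarith
  refine dissectsInto_Tg_stdQuad_of_cut (by linarith) ⟨hl₀, hl₁⟩ ⟨by positivity, hsl⟩ hcut
    (affineCopy_convexHull_quad (affineEquivOfDet (1 - l * (1 - δ)) 0 (l * (1 - s))
      (1 - s * l) 0 (s * l) (by nlinarith)) (by ext <;> simp) (by ext <;> simp; ring) ?_
      (by ext <;> simp))
  ext <;> simp
  · linear_combination -hcut - hδ
  · linear_combination hcut + l * s * hδ

theorem dissectsInto_Tg_stdQuad_of_mul_eq (hs₁ : s < 1) (ht₁ : t < 1) (hst : 1 < s + t)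
    (hδ : δ * s = t * (s + t - 1)) : DissectsInto (stdQuad s t) (Tg δ) 2 := by
  have hs₀ : 0 < s := by linarith
  have hδ₀ : 0 < δ := by nlinarith
  obtain ⟨l, hl, hl₀, hl₁⟩ : ∃ l, l * (s + t) = 1 ∧ 0 < l ∧ l < 1 :=
    ⟨1 / (s + t), by field_simp, by positivity, by rw [div_lt_one (by linarith)]; exact hst⟩
  have hcut : l * (1 - δ) * s = 1 - t := by linear_combination (1 - t) * hl - l * hδ
  have hsl : s * l < 1 := by nlinarith
  refine dissectsInto_Tg_stdQuad_of_cut hδ₀ ⟨hl₀, hl₁⟩ ⟨by positivity, hsl⟩ hcut ?_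
  -- this copy of `stdQuad s t` has the opposite orientation
  rw [show ({(0, s * l), (1 - l * (1 - δ), l), (δ, 1), (0, 1)} : Set (ℝ × ℝ)) =
      {(0, s * l), (0, 1), (δ, 1), (1 - l * (1 - δ), l)} by
    ext; simp only [mem_insert_iff, mem_singleton_iff]; tauto]
  refine affineCopy_convexHull_quad (affineEquivOfDet 0 (1 - l * (1 - δ)) (1 - s * l)
    (l * (1 - s)) 0 (s * l) (by nlinarith)) (by ext <;> simp) (by ext <;> simp) ?_
    (by ext <;> simp; ring)
  ext <;> simp
  · apply mul_left_cancel₀ hs₀.ne'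
    linear_combination (l * t - 1) * hδ + (t ^ 2 - t) * hl
  · linear_combination (1 - s) * hl

theorem dissectsInto_Tg_Qab {α β δ : ℝ} (hα : 0 < α) (hαβ : α < β) (hβ : β < 1)
    (hδ : δ = α * (1 - β) / (1 - α) ∨ δ = α * β) : DissectsInto (Qab α β) (Tg δ) 2 := by
  have hα₁ : 0 < 1 - α := by linarith
  have hs₁ : (1 - β) / (1 - α) < 1 := (div_lt_one hα₁).2 (by linarith)
  have hst : 1 < (1 - β) / (1 - α) + β := by
    rw [div_add' _ _ _ hα₁.ne', lt_div_iff₀ hα₁]; nlinarith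
  refine .of_affineCopy_tile (affineCopy_Qab_stdQuad hα hαβ hβ) ?_
  rcases hδ with rfl | rfl
  · exact dissectsInto_Tg_stdQuad_of_eq hs₁ hβ hst (by field_simp; ring)
  · exact dissectsInto_Tg_stdQuad_of_mul_eq hs₁ hβ hst (by field_simp; ring)

end

/-- For `αβ·min{(1−β)/((1−α)β), 1} ≤ γ < 1` and every even `k ≥ 4`, the trapezoid
`T(γ)` has a dissection into `k` pieces, each affinely equivalent to `Q(α,β)`. -/
theorem Tg_into_k_Qab (α β γ : ℝ) (k : ℕ)
    (hα : 0 < α) (hαβ : α < β) (hβ : β < 1)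
    (hγ₁ : α * β * min ((1 - β) / ((1 - α) * β)) 1 ≤ γ) (hγ₂ : γ < 1)
    (hk : 4 ≤ k) (hke : Even k) :
    ∃ f : Fin k → Set (ℝ × ℝ),
      (⋃ i, f i) = Tg γ ∧
      (Pairwise fun i j => Disjoint (interior (f i)) (interior (f j))) ∧
      ∀ i, AffineCopy (Qab α β) (f i) := by
  obtain ⟨m, rfl⟩ := hke
  set δ := min (α * (1 - β) / (1 - α)) (α * β)
  have hαβ₀ : 0 < α * β := mul_pos hα (by linarith)
  have hδγ : δ ≤ γ := by
    have : α * β * ((1 - β) / ((1 - α) * β)) = α * (1 - β) / (1 - α) := by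
      field_simp [show β ≠ 0 by linarith]
    rwa [mul_min_of_nonneg _ _ hαβ₀.le, this, mul_one] at hγ₁
  have hδ₀ : 0 < δ := lt_min (div_pos (by nlinarith) (by linarith)) hαβ₀
  have hmodel := dissectsInto_Tg_Qab hα hαβ hβ (min_choice _ _)
  obtain ⟨x, hx₀, hx₁, hlast⟩ := exists_affineCopy_Tg_strip hδ₀ hδγ hγ₂
  have hδx : δ * x < γ := by nlinarith
  have h := (hmodel.strip_of_Tg hδ₀ (j := m - 1) (by omega) hx₀).union
    (hmodel.of_affineCopy hlast) (disjoint_interior_strip hx₀ hx₁ (by positivity) hδx)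
  rwa [strip_union_strip hx₀ hx₁ (by positivity) hδx, ← Tg_eq_strip,
    show (m - 1) * 2 + 2 = m + m by omega] at h
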